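/- Let G be a finite simple undirected graph with n vertices and k ≥ 1 an integer, and let Ĝ be a spanning subgraph of G (same vertex set V, edge set a subset of that of G). Write dom, ext for the k-hop domination quantities in G and dom̂, ext̂ for those in Ĝ. Let 1 ≤ p < n, let (A_i) be a greedy sequence for dom in G and (Â_i) a greedy sequence for dom̂ in Ĝ. Then: (i) ext(A) ≥ ext̂(A) for every A ⊆ V; and (ii) if ext̂(Â_p) > 0 then, with θ̂_p = ext̂(Â_p)/p and σ̂_p = ext̂(Â_p)/(n − p), for every B ⊆ V with |B| = p, max{ext(A_p), ext(Â_p)} ≥ max{ext(A_p), ext̂(Â_p)} ≥ max{θ̂_p(e − 1)/(1 + θ̂_p e), σ̂_p} · ext(B). -/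

import Mathlib

/-!
Adding edges only shortens distances, so `k`-neighborhoods, and with them `domk` and `extk`, can
only grow from `G'` to `G`; this gives (i) and the last inequality.

For the main bound, the classical averaging argument shows that each greedy step closes at least
a `1/p` fraction of the gap to `domk G k B`, so `domk G k (A p) ≥ (1 - e⁻¹) domk G k B`, that is
`extk G k (A p) ≥ ((e - 1) x - p) / e` for `x = extk G k B`. With `E = extk G' k (A' p)`, the
`θ`-term times `x` is the convex combination of this lower bound and `E` with weights
proportional to `E e` and `p`, and the `σ`-term times `x` is at most `E` because `x ≤ n - p`.
-/

open Finset
open scoped Classical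

/-- The closed `k`-neighborhood of `v`: all vertices at graph distance at most `k`
from `v` (in particular `v` itself). -/
noncomputable def kNbhd {V : Type*} [Fintype V] (G : SimpleGraph V) (k : ℕ) (v : V) :
    Finset V :=
  Finset.univ.filter (fun u => G.Reachable u v ∧ G.dist u v ≤ k)

/-- `domk G k A` is the number of vertices `k`-hop dominated by `A`. -/
noncomputable def domk {V : Type*} [Fintype V] (G : SimpleGraph V) (k : ℕ) (A : Finset V) :
    ℕ :=
  (A.biUnion (kNbhd G k)).card

/-- `extk G k A` is the number of vertices externally `k`-hop dominated by `A`. -/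
noncomputable def extk {V : Type*} [Fintype V] (G : SimpleGraph V) (k : ℕ) (A : Finset V) :
    ℤ :=
  (domk G k A : ℤ) - (A.card : ℤ)

/-- A greedy sequence for `domk G k` (with `N` greedy steps): `A 0 = ∅` and each
`A (i+1)` is obtained from `A i` by inserting a new vertex maximizing `domk`. -/
def IsGreedySeq {V : Type*} [Fintype V] (G : SimpleGraph V) (k : ℕ) (N : ℕ)
    (A : ℕ → Finset V) : Prop :=
  A 0 = ∅ ∧ ∀ i < N, ∃ v ∉ A i, A (i + 1) = insert v (A i) ∧
    ∀ u ∉ A i, domk G k (insert u (A i)) ≤ domk G k (insert v (A i))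

theorem Finset.exists_card_biUnion_sdiff_le_card_mul {α β : Type*} [DecidableEq β]
    (N : α → Finset β) (S : Finset β) {B : Finset α} (hB : B.Nonempty) :
    ∃ v ∈ B, #(B.biUnion N \ S) ≤ #B * #(N v \ S) := by
  obtain ⟨v, hv, hmax⟩ := B.exists_max_image (fun u => #(N u \ S)) hB
  refine ⟨v, hv, ?_⟩
  have hsplit : B.biUnion N \ S = B.biUnion fun u => N u \ S := by
    ext x
    simp only [mem_sdiff, mem_biUnion]
    tauto
  rw [hsplit]
  exact card_biUnion_le_card_mul B _ _ hmax

section Domination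

variable {V : Type*} [Fintype V] (G : SimpleGraph V) (k : ℕ)

theorem kNbhd_mono_graph {G' : SimpleGraph V} (h : G' ≤ G) (v : V) :
    kNbhd G' k v ⊆ kNbhd G k v := by
  intro u hu
  simp only [kNbhd, mem_filter, mem_univ, true_and] at hu ⊢
  exact ⟨hu.1.mono h, (hu.1.dist_anti h).trans hu.2⟩

theorem self_mem_kNbhd (v : V) : v ∈ kNbhd G k v := by
  simp [kNbhd]

theorem domk_mono {A B : Finset V} (h : A ⊆ B) : domk G k A ≤ domk G k B :=
  card_le_card (biUnion_subset_biUnion_of_subset_left _ h)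

theorem domk_mono_graph {G' : SimpleGraph V} (h : G' ≤ G) (A : Finset V) :
    domk G' k A ≤ domk G k A :=
  card_le_card (biUnion_mono fun v _ => kNbhd_mono_graph G k h v)

theorem card_le_domk (A : Finset V) : #A ≤ domk G k A :=
  card_le_card fun v hv => mem_biUnion.mpr ⟨v, hv, self_mem_kNbhd G k v⟩

theorem extk_mono_graph {G' : SimpleGraph V} (h : G' ≤ G) (A : Finset V) :
    extk G' k A ≤ extk G k A := by
  have := domk_mono_graph G k h A
  unfold extk
  omega

theorem extk_nonneg (A : Finset V) : 0 ≤ extk G k A := by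
  have := card_le_domk G k A
  unfold extk
  omega

theorem extk_le_card_sub_card (A : Finset V) : extk G k A ≤ Fintype.card V - #A := by
  have : domk G k A ≤ Fintype.card V := card_le_univ _
  unfold extk
  omega

theorem domk_insert (A : Finset V) (v : V) :
    domk G k (insert v A) = domk G k A + #(kNbhd G k v \ A.biUnion (kNbhd G k)) := by
  rw [domk, biUnion_insert, ← card_sdiff_add_card, domk, add_comm]

theorem exists_mem_sub_domk_le_card_mul {B : Finset V} (hB : B.Nonempty) (A : Finset V) :
    ∃ v ∈ B, (domk G k B : ℝ) - domk G k A ≤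
      #B * ((domk G k (insert v A) : ℝ) - domk G k A) := by
  obtain ⟨v, hv, hle⟩ :=
    exists_card_biUnion_sdiff_le_card_mul (kNbhd G k) (A.biUnion (kNbhd G k)) hB
  refine ⟨v, hv, ?_⟩
  have hcover : domk G k B ≤ domk G k A + #B * #(kNbhd G k v \ A.biUnion (kNbhd G k)) :=
    (card_le_card_sdiff_add_card (t := A.biUnion (kNbhd G k))).trans (by rw [domk]; omega)
  rw [domk_insert, Nat.cast_add, add_sub_cancel_left, sub_le_iff_le_add']
  exact_mod_cast hcover

end Domination

namespace IsGreedySeq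

variable {V : Type*} [Fintype V] {G : SimpleGraph V} {k N : ℕ} {A : ℕ → Finset V}

theorem card_eq (hA : IsGreedySeq G k N A) {i : ℕ} (hi : i ≤ N) : #(A i) = i := by
  induction i with
  | zero => simp [hA.1]
  | succ i ih =>
    obtain ⟨v, hv, hstep, -⟩ := hA.2 i (by omega)
    rw [hstep, card_insert_of_notMem hv, ih (by omega)]

theorem sub_domk_le_card_mul_gain (hA : IsGreedySeq G k N A) {i : ℕ} (hi : i < N)
    {B : Finset V} (hB : B.Nonempty) :
    (domk G k B : ℝ) - domk G k (A i) ≤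
      #B * ((domk G k (A (i + 1)) : ℝ) - domk G k (A i)) := by
  obtain ⟨v, -, hstep, hmax⟩ := hA.2 i hi
  obtain ⟨w, -, hw⟩ := exists_mem_sub_domk_le_card_mul G k hB (A i)
  have hgreedy : domk G k (insert w (A i)) ≤ domk G k (A (i + 1)) := by
    rw [hstep]
    by_cases hwA : w ∈ A i
    · rw [insert_eq_of_mem hwA]
      exact domk_mono G k (subset_insert _ _)
    · exact hmax w hwA
  refine hw.trans ?_
  gcongr

theorem sub_domk_le_pow_mul (hA : IsGreedySeq G k N A) {B : Finset V} (hB : B.Nonempty)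
    {i : ℕ} (hi : i ≤ N) :
    (domk G k B : ℝ) - domk G k (A i) ≤ (1 - 1 / #B) ^ i * domk G k B := by
  have hcard : (1 : ℝ) ≤ #B := by exact_mod_cast hB.card_pos
  have hfactor : (0 : ℝ) ≤ 1 - 1 / #B :=
    sub_nonneg.mpr (div_le_one_of_le₀ hcard (by positivity))
  induction i with
  | zero => simp [hA.1, domk]
  | succ i ih =>
    have hstep := hA.sub_domk_le_card_mul_gain (by omega : i < N) hB
    have hcontract : (domk G k B : ℝ) - domk G k (A (i + 1)) ≤
        (1 - 1 / #B) * ((domk G k B : ℝ) - domk G k (A i)) := by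
      have hgain : ((domk G k B : ℝ) - domk G k (A i)) / #B ≤
          (domk G k (A (i + 1)) : ℝ) - domk G k (A i) := by
        rw [div_le_iff₀ (by linarith)]
        linarith
      rw [sub_mul, one_mul, one_div_mul_eq_div]
      linarith
    calc (domk G k B : ℝ) - domk G k (A (i + 1))
        ≤ (1 - 1 / #B) * ((domk G k B : ℝ) - domk G k (A i)) := hcontract
      _ ≤ (1 - 1 / #B) * ((1 - 1 / #B) ^ i * domk G k B) := by gcongr; exact ih (by omega)
      _ = (1 - 1 / #B) ^ (i + 1) * domk G k B := by ring

theorem one_sub_exp_neg_one_mul_domk_le (hA : IsGreedySeq G k N A) {B : Finset V}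
    (hB : #B = N) : (1 - Real.exp (-1)) * domk G k B ≤ domk G k (A N) := by
  rcases B.eq_empty_or_nonempty with rfl | hne
  · simp [domk]
  have hgap := hA.sub_domk_le_pow_mul hne le_rfl
  have hpow : (1 - 1 / (N : ℝ)) ^ N ≤ Real.exp (-1) :=
    Real.one_sub_div_pow_le_exp_neg (by exact_mod_cast hB ▸ hne.card_pos)
  rw [hB] at hgap
  have := mul_le_mul_of_nonneg_right hpow (Nat.cast_nonneg (α := ℝ) (domk G k B))
  linarith

theorem sub_div_exp_le_extk (hA : IsGreedySeq G k N A) {B : Finset V} (hB : #B = N) :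
    ((Real.exp 1 - 1) * extk G k B - N) / Real.exp 1 ≤ extk G k (A N) := by
  have h := hA.one_sub_exp_neg_one_mul_domk_le hB
  rw [Real.exp_neg] at h
  rw [div_le_iff₀ (Real.exp_pos 1)]
  unfold extk
  push_cast
  rw [hB, hA.card_eq le_rfl]
  field_simp at h
  linarith

end IsGreedySeq

theorem ratio_mul_le_max {E P e x L : ℝ} (hE : 0 < E) (hP : 0 < P) (he : 0 < e)
    (hL : ((e - 1) * x - P) / e ≤ L) :
    E / P * (e - 1) / (1 + E / P * e) * x ≤ max L E := by
  have hD : 0 < P + E * e := by positivity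
  have hconvex : E / P * (e - 1) / (1 + E / P * e) * x =
      E * e / (P + E * e) * (((e - 1) * x - P) / e) + P / (P + E * e) * E := by
    field_simp
    ring
  calc E / P * (e - 1) / (1 + E / P * e) * x
      = E * e / (P + E * e) * (((e - 1) * x - P) / e) + P / (P + E * e) * E := hconvex
    _ ≤ E * e / (P + E * e) * max L E + P / (P + E * e) * max L E := by
        gcongr
        · exact hL.trans (le_max_left L E)
        · exact le_max_right L E
    _ = max L E := by rw [← add_mul, ← add_div, add_comm, div_self hD.ne', one_mul]

theorem greedy_ext_subgraph_guarantees_general {V : Type*} [Fintype V] (G G' : SimpleGraph V)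
    (hsub : G' ≤ G) (k : ℕ) (p : ℕ) (hp1 : 1 ≤ p) (hpn : p < Fintype.card V)
    (A A' : ℕ → Finset V) (hA : IsGreedySeq G k p A) :
    (∀ C : Finset V, extk G' k C ≤ extk G k C) ∧
    (0 < extk G' k (A' p) →
      ∀ B : Finset V, B.card = p →
        max (((extk G' k (A' p) : ℝ) / p * (Real.exp 1 - 1)) /
              (1 + (extk G' k (A' p) : ℝ) / p * Real.exp 1))
            ((extk G' k (A' p) : ℝ) / (Fintype.card V - p)) * (extk G k B : ℝ) ≤
          max (extk G k (A p) : ℝ) (extk G' k (A' p) : ℝ) ∧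
        max (extk G k (A p) : ℝ) (extk G' k (A' p) : ℝ) ≤
          max (extk G k (A p) : ℝ) (extk G k (A' p) : ℝ)) := by
  refine ⟨extk_mono_graph G k hsub, fun hpos B hB => ⟨?_, ?_⟩⟩
  · have hE : (0 : ℝ) < extk G' k (A' p) := by exact_mod_cast hpos
    have hx : (0 : ℝ) ≤ extk G k B := by exact_mod_cast extk_nonneg G k B
    have hxn : (extk G k B : ℝ) ≤ Fintype.card V - p := by
      exact_mod_cast hB ▸ extk_le_card_sub_card G k B
    have hnp : (0 : ℝ) < Fintype.card V - p := sub_pos.mpr (by exact_mod_cast hpn)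
    rw [max_mul_of_nonneg _ _ hx]
    refine max_le (ratio_mul_le_max hE (by exact_mod_cast hp1) (Real.exp_pos 1)
      (hA.sub_div_exp_le_extk hB)) ?_
    calc (extk G' k (A' p) : ℝ) / (Fintype.card V - p) * extk G k B
        ≤ extk G' k (A' p) := by
          rw [div_mul_eq_mul_div, div_le_iff₀ hnp]
          gcongr
      _ ≤ _ := le_max_right _ _
  · exact max_le_max le_rfl (by exact_mod_cast extk_mono_graph G k hsub (A' p))

/-- bounds obtained from a greedy run on a spanning subgraph `G'` of `G`. -/
theorem greedy_ext_subgraph_guarantees {V : Type*} [Fintype V] (G G' : SimpleGraph V)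
    (hsub : G' ≤ G) (k : ℕ) (hk : 1 ≤ k) (p : ℕ) (hp1 : 1 ≤ p) (hpn : p < Fintype.card V)
    (A A' : ℕ → Finset V) (hA : IsGreedySeq G k p A) (hA' : IsGreedySeq G' k p A') :
    (∀ C : Finset V, extk G' k C ≤ extk G k C) ∧
    (0 < extk G' k (A' p) →
      ∀ B : Finset V, B.card = p →
        max (((extk G' k (A' p) : ℝ) / p * (Real.exp 1 - 1)) /
              (1 + (extk G' k (A' p) : ℝ) / p * Real.exp 1))
            ((extk G' k (A' p) : ℝ) / (Fintype.card V - p)) * (extk G k B : ℝ) ≤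
          max (extk G k (A p) : ℝ) (extk G' k (A' p) : ℝ) ∧
        max (extk G k (A p) : ℝ) (extk G' k (A' p) : ℝ) ≤
          max (extk G k (A p) : ℝ) (extk G k (A' p) : ℝ)) :=
  greedy_ext_subgraph_guarantees_general G G' hsub k p hp1 hpn A A' hA
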